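/- Let (W, ⊏) be a tree (for all w,u,v, if w ⊏ v and u ⊏ v then w = u or w ⊏⁺ u or u ⊏⁺ w) such that ⊏ is converse well-founded (no infinite ascending ⊏-chain). Define w ∼ u iff w = u or there exists v which is an immediate ⊏-predecessor of both w and u, and define w ⊏̂ u iff w ∼ v and v ⊏⁺ u for some v (where ⊏⁺ is the transitive closure of ⊏). Then ⊏̂ is converse well-founded. -/

import Mathlib

/-- `z` is an immediate `r`-predecessor of `w`. -/
def ImmPred {W : Type*} (r : W → W → Prop) (z w : W) : Prop :=
  r z w ∧ ¬ ∃ y, Relation.TransGen r z y ∧ Relation.TransGen r y w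

/-- `w ∼ u` iff `w = u` or they share an immediate predecessor. -/
def SimR {W : Type*} (r : W → W → Prop) (w u : W) : Prop :=
  w = u ∨ ∃ z, ImmPred r z w ∧ ImmPred r z u

/-- `w ⊏̂ u` iff `w ∼ v` and `v ⊏⁺ u` for some `v`. -/
def HatR {W : Type*} (r : W → W → Prop) (w u : W) : Prop :=
  ∃ v, SimR r w v ∧ Relation.TransGen r v u

lemma key_step {W : Type*} (r : W → W → Prop)
    (tree : ∀ w u v, r w v → r u v →
      w = u ∨ Relation.TransGen r w u ∨ Relation.TransGen r u w)
    {a b c : W} (hab : Relation.TransGen r a b) (hbc : SimR r b c) :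
    Relation.TransGen r a c := by
  rcases hbc with rfl | ⟨z, ⟨hzb, hnb⟩, ⟨hzc, _⟩⟩
  · exact hab
  obtain ⟨x, hax, hxb⟩ := Relation.TransGen.tail'_iff.1 hab
  rcases tree x z b hxb hzb with rfl | h | h
  · exact Relation.TransGen.tail' hax hzc
  · exact Relation.TransGen.tail' (hax.trans h.to_reflTransGen) hzc
  · exact absurd ⟨x, h, Relation.TransGen.single hxb⟩ hnb

/-- If `(W, ⊏)` is a converse well-founded tree, then `⊏̂` is converse
well-founded (there is no infinite ascending `⊏̂`-chain). -/
theorem hatR_converse_wellFounded {W : Type*} (r : W → W → Prop)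
    (tree : ∀ w u v, r w v → r u v →
      w = u ∨ Relation.TransGen r w u ∨ Relation.TransGen r u w)
    (cwf : ¬ ∃ f : ℕ → W, ∀ n, r (f n) (f (n + 1))) :
    ¬ ∃ f : ℕ → W, ∀ n, HatR r (f n) (f (n + 1)) := by
  rintro ⟨f, hf⟩
  choose v hsim htg using hf
  have wf : WellFounded (flip r) := by
    by_contra hwf
    have hex : ∃ a, ¬ Acc (flip r) a := by
      by_contra h'; push_neg at h'; exact hwf ⟨h'⟩
    obtain ⟨a, ha⟩ := hex
    have step : ∀ x : {x // ¬ Acc (flip r) x}, ∃ y : {x // ¬ Acc (flip r) x}, r x.1 y.1 := by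
      rintro ⟨x, hx⟩
      obtain ⟨b, hb, hrb⟩ := exists_not_acc_lt_of_not_acc hx
      exact ⟨⟨b, hb⟩, hrb⟩
    choose g hg using step
    refine cwf ⟨fun n => (g^[n] ⟨a, ha⟩ : {x // ¬ Acc (flip r) x}).1, fun n => ?_⟩
    simp only [Function.iterate_succ_apply']
    exact hg _
  have wft : WellFounded (Relation.TransGen (flip r)) := wf.transGen
  have chain : ∀ n, Relation.TransGen r (v n) (v (n + 1)) :=
    fun n => key_step r tree (htg n) (hsim (n + 1))
  have noAcc : ∀ x, Acc (Relation.TransGen (flip r)) x → ∀ n, x = v n → False := by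
    intro x hx
    induction hx with
    | intro y _ ih =>
      rintro n rfl
      exact ih (v (n + 1)) ((Relation.transGen_swap).2 (chain n)) (n + 1) rfl
  exact noAcc (v 0) (wft.apply (v 0)) 0 rfl
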